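/- Let E and F be real Banach spaces, Λ₁ > 0, γ ≥ 0 with 2 γ Λ₁² < 1, and Π₁, Π₂, Π₃ ≥ 0. Let f : ℝ × E × F → ℝ satisfy |f(τ₁, x, y) − f(τ₂, x, y)| ≥ Λ₁^{−1} |τ₁ − τ₂|, |f(τ, x₁, y) − f(τ, x₂, y)| ≤ Λ₁ ‖x₁ − x₂‖, |f(τ, x, y₁) − f(τ, x, y₂)| ≤ Λ₁ ‖y₁ − y₂‖ for all arguments, and let g^s : ℝ × E × F → F satisfy ‖g^s(τ₁, x, y) − g^s(τ₂, x, y)‖ ≤ Π₁ |τ₁ − τ₂|, ‖g^s(τ, x₁, y) − g^s(τ, x₂, y)‖ ≤ Π₂ ‖x₁ − x₂‖, ‖g^s(τ, x, y₁) − g^s(τ, x, y₂)‖ ≤ Π₃ ‖y₁ − y₂‖. For ℓ = 1, 2 let x^{(u,ℓ)} : ℝ → E and x^{(s,ℓ)} : ℝ → F be γ-Lipschitz, and suppose τ₁⁻, τ₂⁻, τ ∈ ℝ satisfy f(τ_ℓ⁻, x^{(u,ℓ)}(τ_ℓ⁻), x^{(s,ℓ)}(τ_ℓ⁻)) = τ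 for ℓ = 1, 2. Set K = Λ₁² (Π₁ + Π₂ γ + Π₃ γ)/(1 − 2 γ Λ₁²). Then ‖g^s(τ₁⁻, x^{(u,1)}(τ₁⁻), x^{(s,1)}(τ₁⁻)) − g^s(τ₂⁻, x^{(u,2)}(τ₂⁻), x^{(s,2)}(τ₂⁻))‖ ≤ (Π₂ + K) ‖x^{(u,1)}(τ₁⁻) − x^{(u,2)}(τ₁⁻)‖ + (Π₃ + K) ‖x^{(s,1)}(τ₁⁻) − x^{(s,2)}(τ₁⁻)‖. -/

import Mathlib

/-!
The two base points satisfy `f(τ₁⁻, p₁) = f(τ₂⁻, p₂) = τ`. Since `f` expands in `τ` by at least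
`Λ₁⁻¹` and is `Λ₁`-Lipschitz in the other variables, while the sections are `γ`-Lipschitz, the
parameter gap `d = |τ₁⁻ - τ₂⁻|` satisfies `Λ₁⁻¹ d ≤ Λ₁ (a + b + 2γd)`, where `a`, `b` are the
`C⁰` distances of the sections at `τ₁⁻`. The smallness `2γΛ₁² < 1` absorbs the `d` on the right,
giving `d ≤ Λ₁² (a + b) / (1 - 2γΛ₁²)`; the Lipschitz bounds of `gs` then bound the difference
of stable components by `P₂ a + P₃ b + (P₁ + P₂γ + P₃γ) d`.
-/

section PartialLipschitz

variable {E F G : Type*} [SeminormedAddCommGroup E] [SeminormedAddCommGroup F]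
  [SeminormedAddCommGroup G]

theorem norm_sub_le_of_partial_lipschitz {h : E → F → G} {A B : ℝ}
    (hx : ∀ x₁ x₂ y, ‖h x₁ y - h x₂ y‖ ≤ A * ‖x₁ - x₂‖)
    (hy : ∀ x y₁ y₂, ‖h x y₁ - h x y₂‖ ≤ B * ‖y₁ - y₂‖) (x₁ x₂ : E) (y₁ y₂ : F) :
    ‖h x₁ y₁ - h x₂ y₂‖ ≤ A * ‖x₁ - x₂‖ + B * ‖y₁ - y₂‖ :=
  (norm_sub_le_norm_sub_add_norm_sub _ (h x₂ y₁) _).trans (add_le_add (hx _ _ _) (hy _ _ _))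

theorem norm_sub_le_of_partial_lipschitz₃ {g : ℝ → E → F → G} {P₁ P₂ P₃ : ℝ}
    (ht : ∀ t₁ t₂ x y, ‖g t₁ x y - g t₂ x y‖ ≤ P₁ * |t₁ - t₂|)
    (hx : ∀ t x₁ x₂ y, ‖g t x₁ y - g t x₂ y‖ ≤ P₂ * ‖x₁ - x₂‖)
    (hy : ∀ t x y₁ y₂, ‖g t x y₁ - g t x y₂‖ ≤ P₃ * ‖y₁ - y₂‖)
    (t₁ t₂ : ℝ) (x₁ x₂ : E) (y₁ y₂ : F) :
    ‖g t₁ x₁ y₁ - g t₂ x₂ y₂‖ ≤ P₁ * |t₁ - t₂| + (P₂ * ‖x₁ - x₂‖ + P₃ * ‖y₁ - y₂‖) :=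
  (norm_sub_le_norm_sub_add_norm_sub _ (g t₂ x₁ y₁) _).trans
    (add_le_add (ht _ _ _ _) (norm_sub_le_of_partial_lipschitz (hx t₂) (hy t₂) _ _ _ _))

theorem inv_mul_abs_sub_le_of_eq {f : ℝ → E → F → ℝ} {Λ : ℝ}
    (ht : ∀ t₁ t₂ x y, Λ⁻¹ * |t₁ - t₂| ≤ |f t₁ x y - f t₂ x y|)
    (hx : ∀ t x₁ x₂ y, |f t x₁ y - f t x₂ y| ≤ Λ * ‖x₁ - x₂‖)
    (hy : ∀ t x y₁ y₂, |f t x y₁ - f t x y₂| ≤ Λ * ‖y₁ - y₂‖)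
    {t₁ t₂ : ℝ} {x₁ x₂ : E} {y₁ y₂ : F} (heq : f t₁ x₁ y₁ = f t₂ x₂ y₂) :
    Λ⁻¹ * |t₁ - t₂| ≤ Λ * ‖x₁ - x₂‖ + Λ * ‖y₁ - y₂‖ := by
  calc Λ⁻¹ * |t₁ - t₂| ≤ |f t₁ x₂ y₂ - f t₂ x₂ y₂| := ht _ _ _ _
    _ = ‖f t₁ x₂ y₂ - f t₁ x₁ y₁‖ := by rw [heq, Real.norm_eq_abs]
    _ ≤ Λ * ‖x₂ - x₁‖ + Λ * ‖y₂ - y₁‖ :=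
      norm_sub_le_of_partial_lipschitz (by simpa only [Real.norm_eq_abs] using hx t₁)
        (by simpa only [Real.norm_eq_abs] using hy t₁) _ _ _ _
    _ = Λ * ‖x₁ - x₂‖ + Λ * ‖y₁ - y₂‖ := by rw [norm_sub_rev x₂, norm_sub_rev y₂]

end PartialLipschitz

theorem norm_sub_le_norm_sub_add_of_lipschitz {E : Type*} [SeminormedAddCommGroup E]
    {u v : ℝ → E} {γ : ℝ} (hv : ∀ t₁ t₂, ‖v t₁ - v t₂‖ ≤ γ * |t₁ - t₂|) (t₁ t₂ : ℝ) :
    ‖u t₁ - v t₂‖ ≤ ‖u t₁ - v t₁‖ + γ * |t₁ - t₂| :=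
  (norm_sub_le_norm_sub_add_norm_sub _ (v t₁) _).trans (add_le_add le_rfl (hv _ _))

theorem le_div_of_inv_mul_le {Λ γ c d : ℝ} (hΛ : 0 < Λ) (hsmall : 2 * γ * Λ ^ 2 < 1)
    (h : Λ⁻¹ * d ≤ Λ * (c + 2 * γ * d)) : d ≤ Λ ^ 2 * c / (1 - 2 * γ * Λ ^ 2) := by
  rw [le_div_iff₀ (by linarith)]
  have := mul_le_mul_of_nonneg_left h hΛ.le
  rw [← mul_assoc, mul_inv_cancel₀ hΛ.ne', one_mul] at this
  linarith

theorem graph_transform_stable_contraction_estimate_general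
    {E F : Type*} [NormedAddCommGroup E]
    [NormedAddCommGroup F]
    (f : ℝ → E → F → ℝ) (gs : ℝ → E → F → F) (Λ₁ γ P₁ P₂ P₃ : ℝ)
    (hΛ₁ : 0 < Λ₁) (hγ : 0 ≤ γ) (hsmall : 2 * γ * Λ₁ ^ 2 < 1)
    (hP₁ : 0 ≤ P₁) (hP₂ : 0 ≤ P₂) (hP₃ : 0 ≤ P₃)
    (hf1 : ∀ τ₁ τ₂ x y, Λ₁⁻¹ * |τ₁ - τ₂| ≤ |f τ₁ x y - f τ₂ x y|)
    (hf2 : ∀ τ x₁ x₂ y, |f τ x₁ y - f τ x₂ y| ≤ Λ₁ * ‖x₁ - x₂‖)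
    (hf3 : ∀ τ x y₁ y₂, |f τ x y₁ - f τ x y₂| ≤ Λ₁ * ‖y₁ - y₂‖)
    (hg1 : ∀ τ₁ τ₂ x y, ‖gs τ₁ x y - gs τ₂ x y‖ ≤ P₁ * |τ₁ - τ₂|)
    (hg2 : ∀ τ x₁ x₂ y, ‖gs τ x₁ y - gs τ x₂ y‖ ≤ P₂ * ‖x₁ - x₂‖)
    (hg3 : ∀ τ x y₁ y₂, ‖gs τ x y₁ - gs τ x y₂‖ ≤ P₃ * ‖y₁ - y₂‖)
    (xu₁ xu₂ : ℝ → E) (xs₁ xs₂ : ℝ → F)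
    (hxu₂ : ∀ τ₁ τ₂, ‖xu₂ τ₁ - xu₂ τ₂‖ ≤ γ * |τ₁ - τ₂|)
    (hxs₂ : ∀ τ₁ τ₂, ‖xs₂ τ₁ - xs₂ τ₂‖ ≤ γ * |τ₁ - τ₂|)
    (τ₁m τ₂m τ : ℝ)
    (h₁ : f τ₁m (xu₁ τ₁m) (xs₁ τ₁m) = τ)
    (h₂ : f τ₂m (xu₂ τ₂m) (xs₂ τ₂m) = τ) :
    ‖gs τ₁m (xu₁ τ₁m) (xs₁ τ₁m) - gs τ₂m (xu₂ τ₂m) (xs₂ τ₂m)‖ ≤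
      (P₂ + Λ₁ ^ 2 * (P₁ + P₂ * γ + P₃ * γ) / (1 - 2 * γ * Λ₁ ^ 2)) *
        ‖xu₁ τ₁m - xu₂ τ₁m‖ +
      (P₃ + Λ₁ ^ 2 * (P₁ + P₂ * γ + P₃ * γ) / (1 - 2 * γ * Λ₁ ^ 2)) *
        ‖xs₁ τ₁m - xs₂ τ₁m‖ := by
  set a := ‖xu₁ τ₁m - xu₂ τ₁m‖
  set b := ‖xs₁ τ₁m - xs₂ τ₁m‖
  set d := |τ₁m - τ₂m|
  have hu := norm_sub_le_norm_sub_add_of_lipschitz (u := xu₁) hxu₂ τ₁m τ₂m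
  have hs := norm_sub_le_norm_sub_add_of_lipschitz (u := xs₁) hxs₂ τ₁m τ₂m
  have hd : d ≤ Λ₁ ^ 2 * (a + b) / (1 - 2 * γ * Λ₁ ^ 2) := by
    refine le_div_of_inv_mul_le hΛ₁ hsmall ?_
    calc Λ₁⁻¹ * d
        ≤ Λ₁ * ‖xu₁ τ₁m - xu₂ τ₂m‖ + Λ₁ * ‖xs₁ τ₁m - xs₂ τ₂m‖ :=
          inv_mul_abs_sub_le_of_eq hf1 hf2 hf3 (h₁.trans h₂.symm)
      _ ≤ Λ₁ * (a + γ * d) + Λ₁ * (b + γ * d) := by gcongr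
      _ = Λ₁ * (a + b + 2 * γ * d) := by ring
  have hc : 0 ≤ P₁ + P₂ * γ + P₃ * γ := by positivity
  calc _ ≤ P₁ * d + (P₂ * ‖xu₁ τ₁m - xu₂ τ₂m‖ + P₃ * ‖xs₁ τ₁m - xs₂ τ₂m‖) :=
        norm_sub_le_of_partial_lipschitz₃ hg1 hg2 hg3 _ _ _ _ _ _
    _ ≤ P₁ * d + (P₂ * (a + γ * d) + P₃ * (b + γ * d)) := by gcongr
    _ = P₂ * a + P₃ * b + (P₁ + P₂ * γ + P₃ * γ) * d := by ring
    _ ≤ P₂ * a + P₃ * b + (P₁ + P₂ * γ + P₃ * γ) * (Λ₁ ^ 2 * (a + b) / (1 - 2 * γ * Λ₁ ^ 2)) := by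
      gcongr
    _ = _ := by ring

/-- Combination of estimates (ctr1) and (ctr2) in the contraction
proof: the difference of the stable components of the graph transforms of two
sections at the same parameter τ is controlled by the C⁰ distance of the original
sections, with constant K = Λ₁²(P₁ + P₂γ + P₃γ)/(1 − 2γΛ₁²). -/
theorem graph_transform_stable_contraction_estimate
    {E F : Type*} [NormedAddCommGroup E] [NormedSpace ℝ E] [CompleteSpace E]
    [NormedAddCommGroup F] [NormedSpace ℝ F] [CompleteSpace F]
    (f : ℝ → E → F → ℝ) (gs : ℝ → E → F → F) (Λ₁ γ P₁ P₂ P₃ : ℝ)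
    (hΛ₁ : 0 < Λ₁) (hγ : 0 ≤ γ) (hsmall : 2 * γ * Λ₁ ^ 2 < 1)
    (hP₁ : 0 ≤ P₁) (hP₂ : 0 ≤ P₂) (hP₃ : 0 ≤ P₃)
    (hf1 : ∀ τ₁ τ₂ x y, Λ₁⁻¹ * |τ₁ - τ₂| ≤ |f τ₁ x y - f τ₂ x y|)
    (hf2 : ∀ τ x₁ x₂ y, |f τ x₁ y - f τ x₂ y| ≤ Λ₁ * ‖x₁ - x₂‖)
    (hf3 : ∀ τ x y₁ y₂, |f τ x y₁ - f τ x y₂| ≤ Λ₁ * ‖y₁ - y₂‖)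
    (hg1 : ∀ τ₁ τ₂ x y, ‖gs τ₁ x y - gs τ₂ x y‖ ≤ P₁ * |τ₁ - τ₂|)
    (hg2 : ∀ τ x₁ x₂ y, ‖gs τ x₁ y - gs τ x₂ y‖ ≤ P₂ * ‖x₁ - x₂‖)
    (hg3 : ∀ τ x y₁ y₂, ‖gs τ x y₁ - gs τ x y₂‖ ≤ P₃ * ‖y₁ - y₂‖)
    (xu₁ xu₂ : ℝ → E) (xs₁ xs₂ : ℝ → F)
    (hxu₁ : ∀ τ₁ τ₂, ‖xu₁ τ₁ - xu₁ τ₂‖ ≤ γ * |τ₁ - τ₂|)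
    (hxu₂ : ∀ τ₁ τ₂, ‖xu₂ τ₁ - xu₂ τ₂‖ ≤ γ * |τ₁ - τ₂|)
    (hxs₁ : ∀ τ₁ τ₂, ‖xs₁ τ₁ - xs₁ τ₂‖ ≤ γ * |τ₁ - τ₂|)
    (hxs₂ : ∀ τ₁ τ₂, ‖xs₂ τ₁ - xs₂ τ₂‖ ≤ γ * |τ₁ - τ₂|)
    (τ₁m τ₂m τ : ℝ)
    (h₁ : f τ₁m (xu₁ τ₁m) (xs₁ τ₁m) = τ)
    (h₂ : f τ₂m (xu₂ τ₂m) (xs₂ τ₂m) = τ) :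
    ‖gs τ₁m (xu₁ τ₁m) (xs₁ τ₁m) - gs τ₂m (xu₂ τ₂m) (xs₂ τ₂m)‖ ≤
      (P₂ + Λ₁ ^ 2 * (P₁ + P₂ * γ + P₃ * γ) / (1 - 2 * γ * Λ₁ ^ 2)) *
        ‖xu₁ τ₁m - xu₂ τ₁m‖ +
      (P₃ + Λ₁ ^ 2 * (P₁ + P₂ * γ + P₃ * γ) / (1 - 2 * γ * Λ₁ ^ 2)) *
        ‖xs₁ τ₁m - xs₂ τ₁m‖ :=
  graph_transform_stable_contraction_estimate_general f gs Λ₁ γ P₁ P₂ P₃ hΛ₁ hγ hsmall hP₁ hP₂ hP₃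
    hf1 hf2 hf3 hg1 hg2 hg3 xu₁ xu₂ xs₁ xs₂ hxu₂ hxs₂ τ₁m τ₂m τ h₁ h₂
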